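/- arXiv:0909.4967 — 2 statements merged into one kernel-verified Lean document; each statement's English description precedes it below -/
import Mathlib

section
/- Let n ≥ 3 and let (a_1, ..., a_{n-1}) be a sequence of positive reals, with the convention a_0 = a_n = 0, satisfying a recursion k·a_i = a_{i+1} + a_{i-1} for all i ∈ {1, ..., n-1} for some real constant k. Then 1 ≤ k < 2. -/
/-- a positive solution of the path-graph recursion with Dirichlet
boundary conditions forces `1 ≤ k < 2`. -/
theorem stmt_0 (n : ℕ) (hn : 3 ≤ n) (a : ℕ → ℝ) (k : ℝ)
    (h0 : a 0 = 0) (hN : a n = 0)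
    (hpos : ∀ i, 1 ≤ i → i ≤ n - 1 → 0 < a i)
    (hrec : ∀ i, 1 ≤ i → i ≤ n - 1 → k * a i = a (i + 1) + a (i - 1)) :
    1 ≤ k ∧ k < 2 := by
  have hnn : ∀ j, j ≤ n → 0 ≤ a j := by
    intro j hj
    rcases Nat.eq_zero_or_pos j with h | h
    · simp [h, h0]
    rcases eq_or_lt_of_le hj with h' | h'
    · simp [h', hN]
    · exact (hpos j h (by omega)).le
  constructor
  · -- 1 ≤ k, via the minimum of a over [1, n-1]
    obtain ⟨m, hm, hmin⟩ := Finset.exists_min_image (Finset.Icc 1 (n-1)) a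
      ⟨1, by simp; omega⟩
    simp only [Finset.mem_Icc] at hm
    have hpm := hpos m hm.1 hm.2
    have hrm := hrec m hm.1 hm.2
    by_cases hcase : m + 1 ≤ n - 1
    · have h1 : a m ≤ a (m+1) := hmin (m+1) (by simp; omega)
      have h2 : 0 ≤ a (m-1) := hnn (m-1) (by omega)
      nlinarith
    · have he : a (m+1) = 0 := by rw [show m + 1 = n by omega, hN]
      have h1 : a m ≤ a (m-1) := hmin (m-1) (Finset.mem_Icc.mpr (by omega))
      nlinarith
  · -- k < 2, by contradiction: differences are nondecreasing if k ≥ 2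
    by_contra hk
    push_neg at hk
    have key : ∀ i, i ≤ n - 1 → a 1 ≤ a (i+1) - a i := by
      intro i
      induction i with
      | zero => intro _; simp [h0]
      | succ i ih =>
        intro hi
        have hih := ih (by omega)
        have hr := hrec (i+1) (by omega) hi
        have hp := hpos (i+1) (by omega) hi
        rw [Nat.add_sub_cancel] at hr
        nlinarith
    have hlast := key (n-1) le_rfl
    rw [show n - 1 + 1 = n by omega, hN] at hlast
    have h1 := hpos (n-1) (by omega) le_rfl
    have h2 := hpos 1 (by omega) (by omega)
    linarith
end

section
/- With the André quasifield multiplication a ⊙ b = a · b^{σ(n(a))} as above (σ constant on elements with the same valuation), for all a₁, a₂, b ∈ K: v(a₁ ⊙ b − a₂ ⊙ b) = v(a₁ − a₂) + v(b). -/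
/-!
When `v a₁ = v a₂` the twists agree and `a₁ ⊙ b - a₂ ⊙ b = (a₁ - a₂) * σ b`. Otherwise
`a₁ ⊙ b` and `a₂ ⊙ b` have the distinct valuations `v aᵢ + v b`, so the ultrametric inequality
is an equality both for them and for `a₁, a₂`.
-/

namespace AddValuation

variable {K Γ₀ : Type*} [Field K] [LinearOrderedAddCommMonoidWithTop Γ₀] (v : AddValuation K Γ₀)

theorem map_sub_of_distinct_val {x y : K} (h : v x ≠ v y) : v (x - y) = min (v x) (v y) := by
  rw [sub_eq_add_neg, v.map_add_of_distinct_val (by rwa [v.map_neg]), v.map_neg]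

/-- `Γ₀` need not be cancellative; `v x` is cancelled by adding `v x⁻¹`. -/
theorem map_mul_sub_mul_of_map_ne {a₁ a₂ x y : K} (ha : v a₁ ≠ v a₂) (hxy : v x = v y) :
    v (a₁ * x - a₂ * y) = v (a₁ - a₂) + v x := by
  rcases eq_or_ne x 0 with rfl | hx
  · rw [v.map_zero] at hxy ⊢
    rw [mul_zero, zero_sub, v.map_neg, v.map_mul, ← hxy, add_top, add_top]
  have hne : v (a₁ * x) ≠ v (a₂ * y) := by
    intro h
    apply ha
    calc v a₁ = v (a₁ * x) + v x⁻¹ := by rw [← v.map_mul, mul_inv_cancel_right₀ hx]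
      _ = v (a₂ * x) + v x⁻¹ := by rw [h, v.map_mul, v.map_mul, hxy]
      _ = v a₂ := by rw [← v.map_mul, mul_inv_cancel_right₀ hx]
  rw [v.map_sub_of_distinct_val hne, v.map_sub_of_distinct_val ha, v.map_mul, v.map_mul, ← hxy,
    min_add_add_right]

theorem map_mul_twist_sub_mul_twist (τ : K → K → K) (hτ : ∀ a x, v (τ a x) = v x)
    (hτ_const : ∀ a₁ a₂, v a₁ = v a₂ → τ a₁ = τ a₂) (a₁ a₂ b : K) :
    v (a₁ * τ a₁ b - a₂ * τ a₂ b) = v (a₁ - a₂) + v b := by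
  by_cases h : v a₁ = v a₂
  · rw [hτ_const a₁ a₂ h, ← sub_mul, v.map_mul, hτ]
  · rw [v.map_mul_sub_mul_of_map_ne h (by rw [hτ, hτ]), hτ]

end AddValuation

theorem WithTop.eq_zero_of_add_self_eq {α : Type*} [AddMonoid α] [IsRightCancelAdd α]
    {x : WithTop α} (hx : x ≠ ⊤) (h : x + x = x) : x = 0 :=
  WithTop.add_right_cancel hx (by rwa [zero_add])

theorem stmt_12_general (K : Type*) [Field K] (v : K → WithTop ℝ)
    (hv0 : ∀ a : K, v a = ⊤ ↔ a = 0)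
    (hvmul : ∀ a b : K, v (a * b) = v a + v b)
    (hvadd : ∀ a b : K, min (v a) (v b) ≤ v (a + b))
    (G : Subgroup (K ≃+* K))
    (hpres : ∀ σ ∈ G, ∀ a : K, v (σ a) = v a)
    (σn : K → K ≃+* K) (hσn : ∀ a : K, σn a ∈ G)
    (hσconst : ∀ a₁ a₂ : K, v a₁ = v a₂ → σn a₁ = σn a₂)
    (mul : K → K → K) (hmul : ∀ a b : K, mul a b = a * (σn a) b) :
    ∀ a₁ a₂ b : K, v (mul a₁ b - mul a₂ b) = v (a₁ - a₂) + v b := by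
  intro a₁ a₂ b
  have hv1 : v 1 = 0 :=
    WithTop.eq_zero_of_add_self_eq (mt (hv0 1).1 one_ne_zero) (by rw [← hvmul, one_mul])
  let w : AddValuation K (WithTop ℝ) := AddValuation.of v ((hv0 0).2 rfl) hv1 hvadd hvmul
  rw [hmul, hmul]
  exact w.map_mul_twist_sub_mul_twist (fun a ↦ σn a)
    (fun a ↦ hpres _ (hσn a)) (fun a₁ a₂ h ↦ congrArg _ (hσconst a₁ a₂ h)) a₁ a₂ b

/-- for the André quasifield multiplication, with `σ ∘ n`
depending only on the valuation and `σ(n(1)) = id`, the quasifield axiom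
`v(a₁ ⊙ b − a₂ ⊙ b) = v(a₁ − a₂) + v(b)` holds. -/
theorem stmt_12 (K : Type*) [Field K] (v : K → WithTop ℝ)
    (hv0 : ∀ a : K, v a = ⊤ ↔ a = 0)
    (hvmul : ∀ a b : K, v (a * b) = v a + v b)
    (hvadd : ∀ a b : K, min (v a) (v b) ≤ v (a + b))
    (hvadd' : ∀ a b : K, v a ≠ v b → v (a + b) = min (v a) (v b))
    (G : Subgroup (K ≃+* K)) [Fintype G]
    (hpres : ∀ σ ∈ G, ∀ a : K, v (σ a) = v a)
    (σn : K → K ≃+* K) (hσn : ∀ a : K, σn a ∈ G)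
    (hσconst : ∀ a₁ a₂ : K, v a₁ = v a₂ → σn a₁ = σn a₂)
    (hσone : σn 1 = RingEquiv.refl K)
    (mul : K → K → K) (hmul : ∀ a b : K, mul a b = a * (σn a) b) :
    ∀ a₁ a₂ b : K, v (mul a₁ b - mul a₂ b) = v (a₁ - a₂) + v b :=
  stmt_12_general K v hv0 hvmul hvadd G hpres σn hσn hσconst mul hmul
end
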